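/- For the unforced system x(k+1) = g(x(k),0) on ℝ² with g₁(ξ,0) = max{ξ₂ − ξ₂², ξ₂/2} and g₂(ξ,0) = max{ξ₁ − ξ₁², ξ₁/2}, the origin is not globally exponentially stable: there exist no constants C ≥ 1 and τ ∈ (0,1) such that |x(k,ξ,0)|_∞ ≤ Cτ^k |ξ|_∞ for all ξ ∈ ℝ² and k ∈ ℕ. Indeed, for ξ in the nonnegative orthant with 0 < |ξ|_∞ and both components equal, |x(k,ξ,0)|_∞ = α_max^k(|ξ|_∞) with α_max(s) = max{s − s², s/2}, and the ratio |x(k+1,ξ,0)|_∞ / |x(k,ξ,0)|_∞ tends to 1 as k → ∞. -/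
import Mathlib


open Filter Topology

/-- Class-K function: continuous, strictly increasing on [0,∞), zero at zero. -/
def ClassK (α : ℝ → ℝ) : Prop :=
  ContinuousOn α (Set.Ici 0) ∧ StrictMonoOn α (Set.Ici 0) ∧ α 0 = 0

/-- Class-K∞ function. -/
def ClassKInf (α : ℝ → ℝ) : Prop :=
  ClassK α ∧ Filter.Tendsto α Filter.atTop Filter.atTop

/-- Class-KL function. -/
def ClassKL (β : ℝ → ℝ → ℝ) : Prop :=
  ContinuousOn (fun p : ℝ × ℝ => β p.1 p.2) (Set.Ici 0 ×ˢ Set.Ici 0) ∧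
  (∀ s, 0 ≤ s → ClassK (fun r => β r s)) ∧
  (∀ r, 0 ≤ r → AntitoneOn (fun s => β r s) (Set.Ici 0) ∧
    Filter.Tendsto (fun s => β r s) Filter.atTop (nhds 0))

/-- Measurement function: continuous and positive semidefinite. -/
def MeasurementFn {E : Type*} [TopologicalSpace E] (ω : E → ℝ) : Prop :=
  Continuous ω ∧ ∀ x, 0 ≤ ω x

/-- Sup-norm of an input sequence. -/
noncomputable def supNorm {U : Type*} [Norm U] (u : ℕ → U) : ℝ := ⨆ k, ‖u k‖

/-- A bounded input sequence. -/
def BddInput {U : Type*} [Norm U] (u : ℕ → U) : Prop := ∃ C, ∀ k, ‖u k‖ ≤ C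

/-- Solution of x(k+1) = g(x(k), u(k)) from initial state ξ. -/
def sol {E U : Type*} (g : E → U → E) (ξ : E) (u : ℕ → U) : ℕ → E
  | 0 => ξ
  | k + 1 => g (sol g ξ u k) (u k)

/-- Composition of gains along a path i(0), i(1), ..., i(k):
`γ (i 0) (i 1) ∘ γ (i 1) (i 2) ∘ ⋯ ∘ γ (i (k-1)) (i k)`. -/
def compAlong {ℓ : ℕ} (γ : Fin ℓ → Fin ℓ → ℝ → ℝ) (i : ℕ → Fin ℓ) : ℕ → ℝ → ℝ
  | 0 => id
  | k + 1 => (compAlong γ i k) ∘ γ (i k) (i (k + 1))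

/-- Cyclic small-gain condition: all gain compositions along cycles of
length at most ℓ are strictly below the identity. -/
def SmallGainCond {ℓ : ℕ} (γ : Fin ℓ → Fin ℓ → ℝ → ℝ) : Prop :=
  ∀ r : ℕ, 1 ≤ r → r ≤ ℓ → ∀ i : ℕ → Fin ℓ, i r = i 0 →
    ∀ s : ℝ, 0 < s → compAlong γ i r s < s

/-- A monotonic norm on ℝ^ℓ. -/
def MonotoneNorm {ℓ : ℕ} (μ : (Fin ℓ → ℝ) → ℝ) : Prop :=
  (∀ z, 0 ≤ μ z) ∧ (∀ z, μ z = 0 ↔ z = 0) ∧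
  (∀ (c : ℝ) z, μ (c • z) = |c| * μ z) ∧
  (∀ z w, μ (z + w) ≤ μ z + μ w) ∧
  (∀ z w : Fin ℓ → ℝ, (∀ i, 0 ≤ z i) → (∀ i, z i ≤ w i) → μ z ≤ μ w)

/-- The unforced example map on ℝ². -/
noncomputable def g0 (ξ : ℝ × ℝ) : ℝ × ℝ :=
  (max (ξ.2 - ξ.2 ^ 2) (ξ.2 / 2), max (ξ.1 - ξ.1 ^ 2) (ξ.1 / 2))

/-- The sup-norm on ℝ². -/
noncomputable def ωmax (ξ : ℝ × ℝ) : ℝ := max |ξ.1| |ξ.2|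


noncomputable def amax (s : ℝ) : ℝ := max (s - s ^ 2) (s / 2)

lemma amax_nonneg {s : ℝ} (hs : 0 ≤ s) : 0 ≤ amax s :=
  le_trans (by linarith) (le_max_right _ _)

lemma amax_pos {s : ℝ} (hs : 0 < s) : 0 < amax s :=
  lt_of_lt_of_le (by linarith) (le_max_right _ _)

lemma amax_le_self {s : ℝ} (hs : 0 ≤ s) : amax s ≤ s :=
  max_le (by nlinarith) (by linarith)

lemma amax_of_half_le {s : ℝ} (hs : 1/2 ≤ s) : amax s = s / 2 :=
  max_eq_right (by nlinarith)

lemma amax_of_le_half {s : ℝ} (h0 : 0 ≤ s) (hs : s ≤ 1/2) : amax s = s - s ^ 2 :=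
  max_eq_left (by nlinarith)

lemma amax_iter_nonneg {s : ℝ} (hs : 0 ≤ s) : ∀ k, 0 ≤ amax^[k] s := by
  intro k; induction k with
  | zero => simpa
  | succ k ih => rw [Function.iterate_succ_apply']; exact amax_nonneg ih

lemma amax_iter_pos {s : ℝ} (hs : 0 < s) : ∀ k, 0 < amax^[k] s := by
  intro k; induction k with
  | zero => simpa
  | succ k ih => rw [Function.iterate_succ_apply']; exact amax_pos ih

lemma amax_iter_anti {s : ℝ} (hs : 0 ≤ s) : Antitone (fun k => amax^[k] s) := by
  apply antitone_nat_of_succ_le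
  intro k
  rw [Function.iterate_succ_apply']
  exact amax_le_self (amax_iter_nonneg hs k)

lemma amax_iter_bound {s : ℝ} (hs : 0 ≤ s) : ∀ k, amax^[k] s ≤ max (1/2) (s / 2 ^ k) := by
  intro k; induction k with
  | zero => simp
  | succ k ih =>
    rw [Function.iterate_succ_apply']
    rcases le_or_gt (amax^[k] s) (1/2) with h | h
    · exact le_max_of_le_left (le_trans (amax_le_self (amax_iter_nonneg hs k)) h)
    · have h2 : amax^[k] s ≤ s / 2 ^ k := by
        rcases max_cases (1/2 : ℝ) (s / 2 ^ k) with ⟨he, _⟩ | ⟨he, _⟩ <;> rw [he] at ih <;> linarith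
      rw [amax_of_half_le h.le]
      refine le_max_of_le_right ?_
      rw [pow_succ, ← div_div]
      linarith

lemma amax_iter_eventually_half {a : ℝ} (ha : 0 ≤ a) :
    ∀ᶠ k in Filter.atTop, amax^[k] a ≤ 1/2 := by
  obtain ⟨N, hN⟩ : ∃ N : ℕ, a / 2 ^ N ≤ 1/2 := by
    obtain ⟨N, hN⟩ := pow_unbounded_of_one_lt (2 * a) (by norm_num : (1:ℝ) < 2)
    exact ⟨N, by rw [div_le_iff₀ (by positivity)]; linarith⟩
  filter_upwards [Filter.eventually_ge_atTop N] with k hk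
  exact le_trans (amax_iter_anti ha hk) (le_trans (amax_iter_bound ha N) (max_le le_rfl hN))

lemma amax_iter_tendsto_zero {a : ℝ} (ha : 0 ≤ a) :
    Filter.Tendsto (fun k => amax^[k] a) Filter.atTop (nhds 0) := by
  have hbdd : BddBelow (Set.range fun k => amax^[k] a) :=
    ⟨0, by rintro x ⟨k, rfl⟩; exact amax_iter_nonneg ha k⟩
  set L := ⨅ k, amax^[k] a with hLdef
  have hL : Filter.Tendsto (fun k => amax^[k] a) Filter.atTop (nhds L) :=
    tendsto_atTop_ciInf (amax_iter_anti ha) hbdd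
  have hL0 : 0 ≤ L := le_ciInf fun k => amax_iter_nonneg ha k
  have h1 : Filter.Tendsto (fun k => amax^[k+1] a) Filter.atTop (nhds L) :=
    hL.comp (Filter.tendsto_add_atTop_nat 1)
  have h2 : Filter.Tendsto (fun k => amax^[k] a - (amax^[k] a) ^ 2) Filter.atTop
      (nhds (L - L ^ 2)) := hL.sub (hL.pow 2)
  have heq : (fun k => amax^[k+1] a) =ᶠ[Filter.atTop]
      fun k => amax^[k] a - (amax^[k] a) ^ 2 := by
    filter_upwards [amax_iter_eventually_half ha] with k hk
    rw [Function.iterate_succ_apply', amax_of_le_half (amax_iter_nonneg ha k) hk]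
  have hLL : L = L - L ^ 2 := tendsto_nhds_unique h1 (h2.congr' heq.symm)
  have : L = 0 := by nlinarith
  rwa [this] at hL

lemma amax_iter_lower {s : ℝ} (h0 : 0 ≤ s) (hs : s ≤ 1/2) :
    ∀ k : ℕ, s / (k + 1) ≤ amax^[k] s ∧ amax^[k] s ≤ 1/2 := by
  intro k; induction k with
  | zero => exact ⟨by norm_num, hs⟩
  | succ k ih =>
    obtain ⟨ih1, ih2⟩ := ih
    have hb0 : 0 ≤ amax^[k] s := amax_iter_nonneg h0 k
    have hK : (0:ℝ) ≤ (k:ℝ) := Nat.cast_nonneg k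
    constructor
    · rw [Function.iterate_succ_apply']
      refine le_trans ?_ (le_max_left _ _)
      set b := amax^[k] s
      set t := s / ((k:ℝ) + 1) with ht
      have ht0 : 0 ≤ t := by positivity
      have hts : t * ((k:ℝ) + 1) = s := div_mul_cancel₀ s (by positivity)
      have step1 : t - t ^ 2 ≤ b - b ^ 2 := by nlinarith
      have step2 : s / ((k:ℝ) + 1 + 1) ≤ t - t ^ 2 := by
        rw [div_le_iff₀ (by positivity)]
        nlinarith [sq_nonneg t, mul_nonneg ht0 hK]
      push_cast
      linarith
    · rw [Function.iterate_succ_apply']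
      exact le_trans (amax_le_self hb0) ih2

lemma g0_iter_diag (a : ℝ) : ∀ k, g0^[k] (a, a) = (amax^[k] a, amax^[k] a) := by
  intro k; induction k with
  | zero => rfl
  | succ k ih =>
    rw [Function.iterate_succ_apply', Function.iterate_succ_apply', ih]
    rfl

lemma omega_iter_diag {a : ℝ} (ha : 0 ≤ a) (k : ℕ) :
    ωmax (g0^[k] (a, a)) = amax^[k] a := by
  rw [g0_iter_diag a k]
  unfold ωmax
  simp [abs_of_nonneg (amax_iter_nonneg ha k)]

/-- the unforced example system is not globally exponentially stable:
on the diagonal of the nonnegative orthant the solution decays like the iterates of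
α_max(s) = max{s − s², s/2}, whose successive ratios tend to 1. -/
theorem example_not_exponentially_stable :
    (∀ ξ : ℝ × ℝ, 0 ≤ ξ.1 → ξ.1 = ξ.2 →
      (∀ k : ℕ, ωmax (g0^[k] ξ) = (fun s : ℝ => max (s - s ^ 2) (s / 2))^[k] (ωmax ξ)) ∧
      (0 < ωmax ξ →
        Filter.Tendsto (fun k : ℕ => ωmax (g0^[k + 1] ξ) / ωmax (g0^[k] ξ))
          Filter.atTop (nhds 1))) ∧
    ¬ ∃ C : ℝ, 1 ≤ C ∧ ∃ τ : ℝ, τ ∈ Set.Ioo (0:ℝ) 1 ∧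
        ∀ (ξ : ℝ × ℝ) (k : ℕ), ωmax (g0^[k] ξ) ≤ C * τ ^ k * ωmax ξ := by
  
  have hfa : (fun s : ℝ => max (s - s ^ 2) (s / 2)) = amax := rfl
  constructor
  · rintro ⟨a, b⟩ h1 h2
    dsimp at h1 h2
    subst h2
    have hωa : ωmax (a, a) = a := by unfold ωmax; simp [abs_of_nonneg h1]
    constructor
    · intro k
      rw [omega_iter_diag h1 k, hωa, hfa]
    · intro hpos
      rw [hωa] at hpos
      have h0 : Filter.Tendsto (fun k => 1 - amax^[k] a) Filter.atTop (nhds 1) := by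
        simpa using (tendsto_const_nhds (x := (1:ℝ))).sub (amax_iter_tendsto_zero h1)
      refine h0.congr' ?_
      filter_upwards [amax_iter_eventually_half h1] with k hk
      have hk0 : 0 < amax^[k] a := amax_iter_pos hpos k
      rw [omega_iter_diag h1 k, omega_iter_diag h1 (k + 1),
        Function.iterate_succ_apply', amax_of_le_half hk0.le hk,
        eq_div_iff hk0.ne']
      ring
  · rintro ⟨C, hC, τ, ⟨hτ0, hτ1⟩, hb⟩
    have hhalf : (0:ℝ) ≤ 1/2 := by norm_num
    have key : ∀ k : ℕ, (1:ℝ) ≤ C * (((k:ℝ) + 1) * τ ^ k) := by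
      intro k
      have h := hb (1/2, 1/2) k
      rw [omega_iter_diag hhalf k] at h
      have hω2 : ωmax ((1:ℝ)/2, (1:ℝ)/2) = 1/2 := by unfold ωmax; norm_num
      rw [hω2] at h
      have hlow := (amax_iter_lower hhalf le_rfl k).1
      have hk1 : (0:ℝ) < (k:ℝ) + 1 := by positivity
      rw [div_le_iff₀ hk1] at hlow
      nlinarith [le_trans hlow (mul_le_mul_of_nonneg_right h hk1.le)]
    have h1 := tendsto_pow_const_mul_const_pow_of_lt_one 1 hτ0.le hτ1
    have h2 := tendsto_pow_atTop_nhds_zero_of_lt_one hτ0.le hτ1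
    have h3 : Filter.Tendsto (fun k : ℕ => ((k:ℝ) + 1) * τ ^ k) Filter.atTop (nhds 0) := by
      have h4 := h1.add h2
      simp only [pow_one] at h4
      have he : (fun k : ℕ => ((k:ℝ) + 1) * τ ^ k) = fun k : ℕ => (k:ℝ) * τ ^ k + τ ^ k := by
        funext k; ring
      rw [he]
      simpa using h4
    have hT : Filter.Tendsto (fun k : ℕ => C * (((k:ℝ) + 1) * τ ^ k)) Filter.atTop (nhds 0) := by
      simpa using (tendsto_const_nhds (x := C)).mul h3
    have hev : ∀ᶠ k : ℕ in Filter.atTop, C * (((k:ℝ) + 1) * τ ^ k) < 1 :=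
      hT.eventually (gt_mem_nhds (by norm_num))
    obtain ⟨k, hk⟩ := hev.exists
    linarith [key k]
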